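/- arXiv:2204.08359 — 3 statements merged into one kernel-verified Lean document; each statement's English description precedes it below -/
import Mathlib

section
/- Composability of greedy MIS: let G = (V,E) be a finite simple graph on n vertices, σ a linear order on V, and 1 ≤ k ≤ n. Let V_k be the set of the k σ-smallest vertices, let M_k = Greedy(G[V_k], σ restricted to V_k), and let W = (V \ V_k) \ N(M_k). Then Greedy(G,σ) = M_k ∪ Greedy(G[W], σ restricted to W). -/
/-- The greedy (lexicographically first) independent set of a finite simple graph `G`
with respect to a linear order `σ` on its vertices: a vertex `v` is added iff no
neighbor of `v` preceding `v` in `σ` has already been added. -/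
noncomputable def greedy {V : Type*} [Finite V] (σ : LinearOrder V) (G : SimpleGraph V) :
    Set V :=
  letI := σ
  fun v => WellFounded.fix (Finite.wellFounded_of_trans_of_irrefl ((· < ·) : V → V → Prop))
    (fun v ih => ∀ u, (h : u < v) → G.Adj u v → ¬ ih u h) v

/-- The restriction of a linear order `σ` on `V` to a subset `U ⊆ V`. -/
noncomputable def restrictOrder {V : Type*} (σ : LinearOrder V) (U : Set V) :
    LinearOrder ↥U :=
  letI := σ
  inferInstance

/-- The closed neighborhood `N(S)` of a vertex set `S`: the union of `S` with the set of
all vertices adjacent in `G` to some vertex of `S`. -/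
def closedN {V : Type*} (G : SimpleGraph V) (S : Set V) : Set V :=
  S ∪ {v | ∃ s ∈ S, G.Adj s v}

/-!
Both sides satisfy the recursion characterising the greedy set (a vertex belongs to it iff none
of its earlier neighbours does), whose solution is unique by well-founded induction along `σ`.
Checking this for `M_k ∪ Greedy(G[W])` only uses that `V_k` is closed downwards: a vertex of `V_k`
sees only earlier vertices of `V_k`, so it obeys the recursion of `M_k`; a later vertex adjacent to
`M_k` has an earlier neighbour in `M_k`; and the earlier neighbours of a vertex of `W` avoid `M_k`,
so only those in the greedy set of `G[W]` matter.
-/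

section

variable {V : Type*} [Finite V] (σ : LinearOrder V) (G : SimpleGraph V)

lemma mem_greedy_iff (v : V) :
    v ∈ greedy σ G ↔ ∀ u, σ.lt u v → G.Adj u v → u ∉ greedy σ G := by
  let := σ
  exact Iff.of_eq
    (WellFounded.fix_eq (Finite.wellFounded_of_trans_of_irrefl ((· < ·) : V → V → Prop))
      (fun v ih => ∀ u, (h : u < v) → G.Adj u v → ¬ ih u h) v)

lemma eq_greedy_of_forall_mem_iff {S : Set V}
    (hS : ∀ v, v ∈ S ↔ ∀ u, σ.lt u v → G.Adj u v → u ∉ S) : S = greedy σ G := by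
  let := σ
  ext v
  induction v using WellFoundedLT.induction with
  | _ v ih =>
    rw [hS, mem_greedy_iff]
    exact forall₂_congr fun u hu => by rw [ih u hu]

lemma mem_image_greedy_induce_iff (U : Set V) {v : V} (hv : v ∈ U) :
    v ∈ Subtype.val '' greedy (restrictOrder σ U) (G.induce U) ↔
      ∀ u ∈ U, σ.lt u v → G.Adj u v →
        u ∉ Subtype.val '' greedy (restrictOrder σ U) (G.induce U) := by
  lift v to U using hv
  rw [Subtype.val_injective.mem_set_image, mem_greedy_iff, Subtype.forall]
  exact forall₂_congr fun u hu => by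
    rw [← Subtype.val_injective.mem_set_image (a := ⟨u, hu⟩)]
    rfl

theorem greedy_eq_union_of_downClosed (U : Set V) (hU : ∀ ⦃u v⦄, σ.lt u v → v ∈ U → u ∈ U) :
    let M : Set V := Subtype.val '' greedy (restrictOrder σ U) (G.induce U)
    let W : Set V := Uᶜ \ closedN G M
    greedy σ G = M ∪ Subtype.val '' greedy (restrictOrder σ W) (G.induce W) := by
  intro M W
  have hMU : M ⊆ U := Subtype.coe_image_subset _ _
  have hWU : Subtype.val '' greedy (restrictOrder σ W) (G.induce W) ⊆ Uᶜ :=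
    (Subtype.coe_image_subset _ _).trans Set.sdiff_subset
  symm
  refine eq_greedy_of_forall_mem_iff σ G fun v => ?_
  by_cases hvU : v ∈ U
  · rw [Set.mem_union, or_iff_left fun hvW => hWU hvW hvU]
    refine (mem_image_greedy_induce_iff σ G U hvU).trans (forall_congr' fun u => ?_)
    refine ⟨fun h hlt hadj => ?_, fun h huU hlt hadj hu => h hlt hadj (Or.inl hu)⟩
    have huU := hU hlt hvU
    exact fun hu => hu.elim (h huU hlt hadj) fun huW => hWU huW huU
  by_cases hvN : v ∈ closedN G M
  · obtain ⟨s, hsM, hsv⟩ : ∃ s ∈ M, G.Adj s v :=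
      hvN.resolve_left fun hvM => hvU (hMU hvM)
    have hsv_lt : σ.lt s v := by
      let := σ
      by_contra! hvs
      exact hvU (hvs.eq_or_lt.elim (· ▸ hMU hsM) (hU · (hMU hsM)))
    refine iff_of_false ?_ fun h => h s hsv_lt hsv (Or.inl hsM)
    rintro (hvM | ⟨w, -, rfl⟩)
    · exact hvU (hMU hvM)
    · exact w.2.2 hvN
  · have hvW : v ∈ W := ⟨hvU, hvN⟩
    rw [Set.mem_union, or_iff_right fun hvM => hvU (hMU hvM)]
    refine (mem_image_greedy_induce_iff σ G W hvW).trans (forall_congr' fun u => ?_)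
    refine ⟨fun h hlt hadj => ?_, fun h huW hlt hadj hu => h hlt hadj (Or.inr hu)⟩
    rintro (huM | hu)
    · exact hvN (Or.inr ⟨u, huM, hadj⟩)
    · exact h (Subtype.coe_image_subset _ _ hu) hlt hadj hu

end

theorem greedy_composable_general {V : Type*} [Finite V] (σ : LinearOrder V) (G : SimpleGraph V)
    (k : ℕ) :
    let Vk : Set V := {v | ({u | σ.lt u v}).ncard < k}
    let Mk : Set V := Subtype.val '' greedy (restrictOrder σ Vk) (G.induce Vk)
    let W : Set V := Vkᶜ \ closedN G Mk
    greedy σ G = Mk ∪ Subtype.val '' greedy (restrictOrder σ W) (G.induce W) := by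
  refine greedy_eq_union_of_downClosed σ G _ fun u v huv hv => ?_
  let := σ
  exact (Set.ncard_le_ncard (fun w hw => lt_trans hw huv) (Set.toFinite _)).trans_lt hv

/-- Composability of greedy MIS: if `V_k` is the set of the `k` `σ`-smallest vertices,
`M_k = Greedy(G[V_k], σ|V_k)`, and `W = (V \ V_k) \ N(M_k)`, then
`Greedy(G,σ) = M_k ∪ Greedy(G[W], σ|W)`. -/
theorem greedy_composable {V : Type*} [Finite V] (σ : LinearOrder V) (G : SimpleGraph V)
    (k : ℕ) (hk1 : 1 ≤ k) (hk2 : k ≤ Nat.card V) :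
    let Vk : Set V := {v | ({u | σ.lt u v}).ncard < k}
    let Mk : Set V := Subtype.val '' greedy (restrictOrder σ Vk) (G.induce Vk)
    let W : Set V := Vkᶜ \ closedN G Mk
    greedy σ G = Mk ∪ Subtype.val '' greedy (restrictOrder σ W) (G.induce W) :=
  greedy_composable_general σ G k
end

section
/- Branching-process extinction tail bound (proved inside Lemma 2 of the paper): let Δ ≥ 1 be an integer and let Y_1, Y_2, … be independent random variables, each binomially distributed with Δ trials and success probability 1/(2Δ). Define A_0 = 1 and A_k = A_{k−1} − 1 + Y_k for k ≥ 1, and let C' = min{k ≥ 0 : A_k = 0}. Then for every integer k ≥ 1, the probability that C' > k is at most e^{−k/6}. -/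
/-!
Before extinction the walk stays positive, so `∑_{i<k} Y_i ≥ k` on the event `C' > k`.
A Chernoff bound with base `2` then gives `P(C' > k) ≤ (E 2^{Y_1})^k / 2^k`, and the binomial
generating function yields `E 2^{Y_1} = (1 + 1/(2Δ))^Δ ≤ e^{1/2}`. Since `e^{1/2}/2 ≤ e^{-1/6}`
(equivalently `2/3 ≤ log 2`), the tail is at most `e^{-k/6}`.
-/

open MeasureTheory ProbabilityTheory
open scoped ENNReal

theorem le_sum_range_of_forall_walk_ne_zero {y : ℕ → ℕ} {k : ℕ}
    (h : ∀ m ≤ k, (1 : ℤ) - m + ∑ i ∈ Finset.range m, (y i : ℤ) ≠ 0) :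
    k ≤ ∑ i ∈ Finset.range k, y i := by
  have key : ∀ m ≤ k, (m : ℤ) ≤ ∑ i ∈ Finset.range m, (y i : ℤ) := by
    intro m hm
    induction m with
    | zero => simp
    | succ m ih =>
      have hstep := h (m + 1) hm
      rw [Finset.sum_range_succ] at hstep ⊢
      push_cast at hstep ⊢
      have := ih (by omega)
      omega
  exact_mod_cast key k le_rfl

section Moments

variable {Ω : Type*} [MeasurableSpace Ω] {μ : Measure Ω}

theorem lintegral_comp_nat_eq_tsum {Y : Ω → ℕ} (hY : Measurable Y) (f : ℕ → ℝ≥0∞) :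
    ∫⁻ ω, f (Y ω) ∂μ = ∑' n, f n * μ {ω | Y ω = n} := by
  rw [← lintegral_map measurable_from_nat hY, lintegral_countable']
  congr with n
  rw [Measure.map_apply hY (measurableSet_singleton n)]
  rfl

theorem lintegral_pow_of_binomial {Y : Ω → ℕ} (hY : Measurable Y) {n : ℕ} {p : ℝ}
    (hp₀ : 0 ≤ p) (hp₁ : p ≤ 1)
    (hdist : ∀ m : ℕ, μ {ω | Y ω = m} =
      ENNReal.ofReal ((n.choose m : ℝ) * p ^ m * (1 - p) ^ (n - m)))
    {t : ℝ} (ht : 0 ≤ t) :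
    ∫⁻ ω, ENNReal.ofReal t ^ Y ω ∂μ = ENNReal.ofReal ((t * p + (1 - p)) ^ n) := by
  have hterm : ∀ m : ℕ, ENNReal.ofReal t ^ m * μ {ω | Y ω = m} =
      ENNReal.ofReal ((t * p) ^ m * (1 - p) ^ (n - m) * n.choose m) := by
    intro m
    rw [hdist, ← ENNReal.ofReal_pow ht, ← ENNReal.ofReal_mul (by positivity)]
    congr 1
    ring
  have hvanish : ∀ m ∉ Finset.range (n + 1),
      ENNReal.ofReal ((t * p) ^ m * (1 - p) ^ (n - m) * n.choose m) = 0 := by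
    intro m hm
    rw [Nat.choose_eq_zero_of_lt (by simpa using hm)]
    simp
  have hp₁' : 0 ≤ 1 - p := by linarith
  rw [lintegral_comp_nat_eq_tsum hY, tsum_congr hterm, tsum_eq_sum hvanish,
    ← ENNReal.ofReal_sum_of_nonneg (fun m _ => by positivity), add_pow]

end Moments

theorem measure_le_sum_le_prod_lintegral_div {Ω ι : Type*} [MeasurableSpace Ω] {μ : Measure Ω}
    {Y : ι → Ω → ℕ} (hmeas : ∀ i, Measurable (Y i)) (hindep : iIndepFun Y μ)
    (s : Finset ι) (a : ℕ) {t : ℝ≥0∞} (ht₁ : 1 ≤ t) (ht : t ≠ ∞) :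
    μ {ω | a ≤ ∑ i ∈ s, Y i ω} ≤ (∏ i ∈ s, ∫⁻ ω, t ^ Y i ω ∂μ) / t ^ a := by
  have hmono : {ω | a ≤ ∑ i ∈ s, Y i ω} ⊆ {ω | t ^ a ≤ ∏ i ∈ s, t ^ Y i ω} := by
    intro ω (hω : a ≤ _)
    show t ^ a ≤ _
    rw [Finset.prod_pow_eq_pow_sum]
    exact pow_le_pow_right₀ ht₁ hω
  have hprod_meas : Measurable fun ω => ∏ i ∈ s, t ^ Y i ω :=
    Finset.measurable_prod _ fun i _ => measurable_from_nat.comp (hmeas i)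
  calc μ {ω | a ≤ ∑ i ∈ s, Y i ω}
      ≤ μ {ω | t ^ a ≤ ∏ i ∈ s, t ^ Y i ω} := measure_mono hmono
    _ ≤ (∫⁻ ω, ∏ i ∈ s, t ^ Y i ω ∂μ) / t ^ a :=
        meas_ge_le_lintegral_div hprod_meas.aemeasurable
          (pow_ne_zero _ (zero_lt_one.trans_le ht₁).ne') (ENNReal.pow_ne_top ht)
    _ = (∏ i ∈ s, ∫⁻ ω, t ^ Y i ω ∂μ) / t ^ a := by
        rw [lintegral_prod_eq_prod_lintegral_of_indepFun s (fun i ω => t ^ Y i ω)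
          (hindep.comp (fun _ n => t ^ n) fun _ => measurable_from_nat)
          (fun i => measurable_from_nat.comp (hmeas i))]

theorem one_add_inv_two_mul_pow_div_two_le (n : ℕ) :
    (1 + 1 / (2 * (n : ℝ))) ^ n / 2 ≤ Real.exp (-1 / 6) := by
  have hpow : (1 + 1 / (2 * (n : ℝ))) ^ n ≤ Real.exp (1 / 2) := by
    calc (1 + 1 / (2 * (n : ℝ))) ^ n ≤ Real.exp (1 / (2 * (n : ℝ))) ^ n := by
          gcongr
          linarith [Real.add_one_le_exp (1 / (2 * (n : ℝ)))]
      _ = Real.exp (n * (1 / (2 * (n : ℝ)))) := (Real.exp_nat_mul _ n).symm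
      _ ≤ Real.exp (1 / 2) := by
          gcongr
          rcases Nat.eq_zero_or_pos n with rfl | hn
          · norm_num
          · field_simp; rfl
  have hlog : Real.exp (2 / 3) ≤ 2 := by
    rw [← Real.le_log_iff_exp_le two_pos]
    linarith [Real.log_two_gt_d9]
  have hsplit : Real.exp (1 / 2) = Real.exp (2 / 3) * Real.exp (-1 / 6) := by
    rw [← Real.exp_add]; norm_num
  rw [div_le_iff₀ two_pos]
  nlinarith [Real.exp_pos (-1 / 6)]

theorem branching_process_tail_general {Ω : Type*} [MeasurableSpace Ω] (μ : Measure Ω)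
    [IsProbabilityMeasure μ] (Δ : ℕ)
    (Y : ℕ → Ω → ℕ) (hmeas : ∀ i, Measurable (Y i))
    (hindep : ProbabilityTheory.iIndepFun Y μ)
    (hdist : ∀ i : ℕ, ∀ m : ℕ, μ {ω | Y i ω = m} =
      ENNReal.ofReal ((Δ.choose m : ℝ) * (1 / (2 * (Δ : ℝ))) ^ m *
        (1 - 1 / (2 * (Δ : ℝ))) ^ (Δ - m)))
    (k : ℕ) :
    μ {ω | ∀ m ≤ k, (1 : ℤ) - (m : ℤ) + ∑ i ∈ Finset.range m, (Y i ω : ℤ) ≠ 0} ≤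
      ENNReal.ofReal (Real.exp (-(k : ℝ) / 6)) := by
  set p : ℝ := 1 / (2 * (Δ : ℝ))
  have hp₀ : 0 ≤ p := by positivity
  have hp₁ : p ≤ 1 := by
    rcases Nat.eq_zero_or_pos Δ with rfl | hΔ
    · simp [p]
    · have : (1 : ℝ) ≤ Δ := by exact_mod_cast hΔ
      exact div_le_one_of_le₀ (by linarith) (by positivity)
  have hmoment (i : ℕ) : ∫⁻ ω, 2 ^ Y i ω ∂μ = ENNReal.ofReal ((1 + p) ^ Δ) := by
    have := lintegral_pow_of_binomial (hmeas i) hp₀ hp₁ (hdist i) zero_le_two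
    rw [ENNReal.ofReal_ofNat] at this
    rw [this, show 2 * p + (1 - p) = 1 + p by ring]
  calc μ {ω | ∀ m ≤ k, (1 : ℤ) - (m : ℤ) + ∑ i ∈ Finset.range m, (Y i ω : ℤ) ≠ 0}
      ≤ μ {ω | k ≤ ∑ i ∈ Finset.range k, Y i ω} :=
        measure_mono fun ω => le_sum_range_of_forall_walk_ne_zero
    _ ≤ (∏ i ∈ Finset.range k, ∫⁻ ω, 2 ^ Y i ω ∂μ) / 2 ^ k :=
        measure_le_sum_le_prod_lintegral_div hmeas hindep _ k one_le_two ENNReal.ofNat_ne_top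
    _ = ENNReal.ofReal (((1 + p) ^ Δ / 2) ^ k) := by
        rw [Finset.prod_congr rfl fun i _ => hmoment i, Finset.prod_const, Finset.card_range,
          div_pow, ENNReal.ofReal_div_of_pos (by positivity),
          ENNReal.ofReal_pow (by positivity : (0 : ℝ) ≤ (1 + p) ^ Δ),
          ENNReal.ofReal_pow zero_le_two, ENNReal.ofReal_ofNat]
    _ ≤ ENNReal.ofReal (Real.exp (-(k : ℝ) / 6)) := by
        gcongr
        calc ((1 + p) ^ Δ / 2) ^ k ≤ Real.exp (-1 / 6) ^ k := by
              gcongr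
              exact one_add_inv_two_mul_pow_div_two_le Δ
          _ = Real.exp (-(k : ℝ) / 6) := by rw [← Real.exp_nat_mul]; ring_nf

/-- Branching-process extinction tail bound: let `Δ ≥ 1` and let `Y_1, Y_2, …` be
independent random variables, each binomially distributed with `Δ` trials and success
probability `1/(2Δ)` (here `Y i` plays the role of `Y_{i+1}`). With `A_0 = 1` and
`A_k = A_{k-1} - 1 + Y_k`, i.e. `A_m = 1 - m + ∑_{i<m} Y i`, and
`C' = min {k ≥ 0 : A_k = 0}`, for every integer `k ≥ 1` the probability that `C' > k`
(equivalently, that `A_m ≠ 0` for all `m ≤ k`) is at most `e^{-k/6}`. -/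
theorem branching_process_tail {Ω : Type*} [MeasurableSpace Ω] (μ : Measure Ω)
    [IsProbabilityMeasure μ] (Δ : ℕ) (hΔ : 1 ≤ Δ)
    (Y : ℕ → Ω → ℕ) (hmeas : ∀ i, Measurable (Y i))
    (hindep : ProbabilityTheory.iIndepFun Y μ)
    (hdist : ∀ i : ℕ, ∀ m : ℕ, μ {ω | Y i ω = m} =
      ENNReal.ofReal ((Δ.choose m : ℝ) * (1 / (2 * (Δ : ℝ))) ^ m *
        (1 - 1 / (2 * (Δ : ℝ))) ^ (Δ - m)))
    (k : ℕ) (hk : 1 ≤ k) :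
    μ {ω | ∀ m ≤ k, (1 : ℤ) - (m : ℤ) + ∑ i ∈ Finset.range m, (Y i ω : ℤ) ≠ 0} ≤
      ENNReal.ofReal (Real.exp (-(k : ℝ) / 6)) :=
  branching_process_tail_general μ Δ Y hmeas hindep hdist k
end

section
/- Communication-set intersection property (Observation 2 of the paper, arithmetic form): let d ≥ 1 be an integer and for each k ∈ {1,…,2^d} define the communication set S_k(d) = { (2·⌊(k−1)/2^{d−j}⌋ + 1)·2^{d−j−1} + 1 : j = 0, 1, …, d−1 }. Then for all integers k, k' with 1 ≤ k < k' ≤ 2^d, there exists an integer r ∈ S_k(d) ∩ S_{k'}(d) such that k < r ≤ k'. -/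
/-- Communication-set intersection property (arithmetic form): for `d ≥ 1` and
`k ∈ {1,…,2^d}`, let `S_k(d) = {(2·⌊(k-1)/2^(d-j)⌋ + 1)·2^(d-j-1) + 1 : 0 ≤ j ≤ d-1}`.
Then for all `1 ≤ k < k' ≤ 2^d` there is `r ∈ S_k(d) ∩ S_{k'}(d)` with `k < r ≤ k'`. -/
theorem communicationSet_intersection (d k k' : ℕ) (hd : 1 ≤ d)
    (hk : 1 ≤ k) (hkk' : k < k') (hk' : k' ≤ 2 ^ d) :
    ∃ r : ℕ,
      (∃ j < d, r = (2 * ((k - 1) / 2 ^ (d - j)) + 1) * 2 ^ (d - j - 1) + 1) ∧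
      (∃ j < d, r = (2 * ((k' - 1) / 2 ^ (d - j)) + 1) * 2 ^ (d - j - 1) + 1) ∧
      k < r ∧ r ≤ k' := by
  set a := k - 1 with ha
  set b := k' - 1 with hb
  have hab : a < b := by omega
  have hbd : b < 2 ^ d := by omega
  have hPd : a / 2 ^ (d - d) ≠ b / 2 ^ (d - d) := by
    simp; omega
  classical
  have hex : ∃ j, a / 2 ^ (d - j) ≠ b / 2 ^ (d - j) := ⟨d, hPd⟩
  let j0 := Nat.find hex
  have hj0 : a / 2 ^ (d - j0) ≠ b / 2 ^ (d - j0) := Nat.find_spec hex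
  have hj0d : j0 ≤ d := Nat.find_min' hex hPd
  have hj0pos : 1 ≤ j0 := by
    rcases Nat.eq_zero_or_pos j0 with h | h
    · exfalso
      apply hj0
      rw [h]
      simp only [Nat.sub_zero]
      rw [Nat.div_eq_of_lt (by omega), Nat.div_eq_of_lt hbd]
    · exact h
  have hprev : ¬ (a / 2 ^ (d - (j0 - 1)) ≠ b / 2 ^ (d - (j0 - 1))) :=
    Nat.find_min hex (by omega)
  set j := j0 - 1 with hj
  have hjd : j < d := by omega
  have heq : a / 2 ^ (d - j) = b / 2 ^ (d - j) := by
    by_contra h; exact hprev h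
  set e := d - j with he
  have he1 : 1 ≤ e := by omega
  have hde : d - j0 = e - 1 := by omega
  have hne : a / 2 ^ (e - 1) ≠ b / 2 ^ (e - 1) := by
    rw [← hde]; exact hj0
  set q := a / 2 ^ e with hq
  have hsplit : 2 ^ (e - 1) * 2 = 2 ^ e := by
    rw [← pow_succ]; congr 1; omega
  have ha2 : a / 2 ^ (e - 1) / 2 = q := by
    rw [Nat.div_div_eq_div_mul, hsplit]
  have hb2 : b / 2 ^ (e - 1) / 2 = q := by
    rw [Nat.div_div_eq_div_mul, hsplit, ← heq]
  have hle2 : a / 2 ^ (e - 1) ≤ b / 2 ^ (e - 1) :=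
    Nat.div_le_div_right (le_of_lt hab)
  have ha1 : a / 2 ^ (e - 1) = 2 * q := by omega
  have hb1 : b / 2 ^ (e - 1) = 2 * q + 1 := by omega
  have hpos : 0 < 2 ^ (e - 1) := Nat.pow_pos (by norm_num)
  have ham : a < (2 * q + 1) * 2 ^ (e - 1) := by
    have h1 := Nat.div_add_mod a (2 ^ (e - 1))
    have h2 : a % 2 ^ (e - 1) < 2 ^ (e - 1) := Nat.mod_lt _ hpos
    rw [ha1] at h1
    nlinarith
  have hbm : (2 * q + 1) * 2 ^ (e - 1) ≤ b := by
    have := Nat.div_mul_le_self b (2 ^ (e - 1))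
    rw [hb1] at this
    exact this
  refine ⟨(2 * q + 1) * 2 ^ (e - 1) + 1, ⟨j, hjd, ?_⟩, ⟨j, hjd, ?_⟩, by omega, by omega⟩
  · rw [← he, ← hq]
  · rw [← he, ← heq]
end
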